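/- arXiv:1903.02404 — 5 statements merged into one kernel-verified Lean document; each statement's English description precedes it below -/
import Mathlib

section
/- If ρ is stable and proper with weakly compact norm-bounded density set, then for ξ ∈ L^{4+2ε}(Ω, P₀): sup_{P∈𝒫} inf_{η∈L^{2+ε}_𝒞(P₀)} E_P[(ξ−η)²] = max_{P∈𝒫} inf_{η∈L^{2+ε}_𝒞(P₀)} E_P[(ξ−η)²], i.e., the outer supremum over the unrestricted inner infimum is attained. -/
open MeasureTheory ProbabilityTheory Filter
open scoped ENNReal

/-- the supremum over `P ∈ 𝒫` of the unrestricted infimum over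
`η ∈ L^{2+ε}_𝒞(P₀)` of `E_P[(ξ-η)²]` is attained at some `P̂ ∈ 𝒫`. -/
theorem stmt6 {Ω : Type*} (m : MeasurableSpace Ω) [mΩ : MeasurableSpace Ω] (hm : m ≤ mΩ)
    (P₀ : Measure Ω) [IsProbabilityMeasure P₀]
    (ε : ℝ) (hε : ε ∈ Set.Ioo (0:ℝ) 1)
    (PP : Set (Measure Ω)) (hne : PP.Nonempty)
    (hprob : ∀ P ∈ PP, IsProbabilityMeasure P)
    -- ρ is proper: every P ∈ 𝒫 is equivalent to P₀
    (hproper : ∀ P ∈ PP, P ≪ P₀ ∧ P₀ ≪ P)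
    -- stability of 𝒫: f^P / E_{P₀}[f^P | 𝒞] is again a density of a member of 𝒫
    (hstable : ∀ P ∈ PP, ∃ Q ∈ PP,
      (fun ω => (Q.rnDeriv P₀ ω).toReal) =ᵐ[P₀]
        fun ω => (P.rnDeriv P₀ ω).toReal /
          (P₀[fun ω' => (P.rnDeriv P₀ ω').toReal | m]) ω)
    -- the density set 𝒟 is norm bounded in L^{1+2/ε}(P₀)
    (hbdd : ∃ C : ℝ≥0∞, C < ⊤ ∧ ∀ P ∈ PP,
      eLpNorm (fun ω => (P.rnDeriv P₀ ω).toReal) (ENNReal.ofReal (1 + 2/ε)) P₀ ≤ C)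
    -- the density set 𝒟 is σ(L^{1+2/ε}, L^{1+ε/2})-(sequentially) compact
    (hcompact : ∀ Pn : ℕ → Measure Ω, (∀ n, Pn n ∈ PP) → ∃ φ : ℕ → ℕ, StrictMono φ ∧
      ∃ Q ∈ PP, ∀ h : Ω → ℝ, MemLp h (ENNReal.ofReal (1 + ε/2)) P₀ →
        Tendsto (fun n => ∫ ω, ((Pn (φ n)).rnDeriv P₀ ω).toReal * h ω ∂P₀) atTop
          (nhds (∫ ω, (Q.rnDeriv P₀ ω).toReal * h ω ∂P₀)))
    (ξ : Ω → ℝ) (hξ : MemLp ξ (ENNReal.ofReal (4 + 2*ε)) P₀) :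
    ∃ Phat ∈ PP,
      sInf {r : ℝ | ∃ η : Ω → ℝ, (MemLp η (ENNReal.ofReal (2+ε)) P₀ ∧ Measurable[m] η) ∧ r = ∫ ω, (ξ ω - η ω)^2 ∂Phat} =
      sSup ((fun P => sInf {r : ℝ | ∃ η : Ω → ℝ, (MemLp η (ENNReal.ofReal (2+ε)) P₀ ∧ Measurable[m] η) ∧ r = ∫ ω, (ξ ω - η ω)^2 ∂P}) '' PP) := by
  obtain ⟨hε0, hε1⟩ := hε
  -- notation
  set S : Measure Ω → Set ℝ := fun P =>
    {r : ℝ | ∃ η : Ω → ℝ, (MemLp η (ENNReal.ofReal (2+ε)) P₀ ∧ Measurable[m] η) ∧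
      r = ∫ ω, (ξ ω - η ω)^2 ∂P} with hS
  set F : Measure Ω → ℝ := fun P => sInf (S P) with hF
  -- the zero function is an admissible η
  have h0mem : ∀ P : Measure Ω, (∫ ω, (ξ ω - (0:ℝ))^2 ∂P) ∈ S P := by
    intro P
    exact ⟨fun _ => (0:ℝ), ⟨MemLp.zero, @measurable_const ℝ Ω _ m 0⟩, rfl⟩
  have hSne : ∀ P : Measure Ω, (S P).Nonempty := fun P => ⟨_, h0mem P⟩
  -- every element of S P is nonnegative
  have hSnonneg : ∀ P : Measure Ω, ∀ r ∈ S P, (0:ℝ) ≤ r := by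
    rintro P r ⟨η, _, rfl⟩
    exact integral_nonneg fun ω => sq_nonneg _
  have hSbdd : ∀ P : Measure Ω, BddBelow (S P) := fun P => ⟨0, hSnonneg P⟩
  -- MemLp of (ξ - η)^2 at exponent 1 + ε/2
  have hqeq : ENNReal.ofReal (2+ε) = 2 * ENNReal.ofReal (1+ε/2) := by
    rw [show (2:ℝ)+ε = 2*(1+ε/2) by ring, ENNReal.ofReal_mul (by norm_num)]
    norm_num
  have hpqr : 1 / ENNReal.ofReal (1+ε/2) =
      1 / ENNReal.ofReal (2+ε) + 1 / ENNReal.ofReal (2+ε) := by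
    rw [hqeq, ← two_mul, show (2:ℝ≥0∞) * (1 / (2 * ENNReal.ofReal (1+ε/2)))
        = 2 * 1 / (2 * ENNReal.ofReal (1+ε/2)) by rw [mul_div_assoc],
      ENNReal.mul_div_mul_left 1 _ (by norm_num) (by norm_num)]
  have hξ' : MemLp ξ (ENNReal.ofReal (2+ε)) P₀ :=
    hξ.mono_exponent (ENNReal.ofReal_le_ofReal (by linarith))
  have hsqmem : ∀ η : Ω → ℝ, MemLp η (ENNReal.ofReal (2+ε)) P₀ →
      MemLp (fun ω => (ξ ω - η ω)^2) (ENNReal.ofReal (1+ε/2)) P₀ := by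
    intro η hη
    have hsub : MemLp (fun ω => ξ ω - η ω) (ENNReal.ofReal (2+ε)) P₀ := hξ'.sub hη
    have := hsub.smul (φ := fun ω => ξ ω - η ω) hsub (hpqr := ⟨by simpa only [one_div] using hpqr.symm⟩)
    simpa [Pi.smul_apply, smul_eq_mul, sq, Pi.mul_def] using this
  -- rewriting E_P[(ξ-η)²] via the density
  have hkey : ∀ P ∈ PP, ∀ g : Ω → ℝ,
      ∫ ω, g ω ∂P = ∫ ω, (P.rnDeriv P₀ ω).toReal * g ω ∂P₀ := by
    intro P hP g
    haveI := hprob P hP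
    rw [← MeasureTheory.integral_rnDeriv_smul (hproper P hP).1]
    simp [smul_eq_mul]
  -- the image of F over PP is bounded above
  have hBdd : BddAbove (F '' PP) := by
    by_contra hB
    have hex : ∀ n : ℕ, ∃ P ∈ PP, (n:ℝ) < F P := by
      intro n
      by_contra hc
      push_neg at hc
      exact hB ⟨(n:ℝ), by rintro r ⟨P, hP, rfl⟩; exact hc P hP⟩
    choose Pn hPn hFn using hex
    obtain ⟨φ, hφ, Q, hQ, hconv⟩ := hcompact Pn hPn
    have hconv0 := hconv (fun ω => (ξ ω - (0:ℝ))^2) (hsqmem _ MemLp.zero)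
    have hle : ∀ n : ℕ, (n:ℝ) ≤ ∫ ω, ((Pn (φ n)).rnDeriv P₀ ω).toReal * (ξ ω - 0)^2 ∂P₀ := by
      intro n
      rw [← hkey _ (hPn (φ n))]
      refine le_trans ?_ (csInf_le (hSbdd _) (h0mem (Pn (φ n))))
      exact le_trans (Nat.cast_le.mpr (hφ.le_apply)) (hFn (φ n)).le
    exact not_tendsto_atTop_of_tendsto_nhds hconv0
      (tendsto_atTop_mono hle tendsto_natCast_atTop_atTop)
  -- a maximizing sequence
  set M : ℝ := sSup (F '' PP) with hM
  have hne' : (F '' PP).Nonempty := hne.image F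
  have hex : ∀ n : ℕ, ∃ P ∈ PP, M - 1/(n+1) < F P := by
    intro n
    obtain ⟨r, ⟨P, hP, rfl⟩, hr⟩ := exists_lt_of_lt_csSup hne'
      (show M - 1/((n:ℝ)+1) < M by
        have : (0:ℝ) < 1/((n:ℝ)+1) := by positivity
        linarith)
    exact ⟨P, hP, hr⟩
  choose Pn hPn hFn using hex
  obtain ⟨φ, hφ, Q, hQ, hconv⟩ := hcompact Pn hPn
  refine ⟨Q, hQ, le_antisymm (le_csSup hBdd ⟨Q, hQ, rfl⟩) ?_⟩
  -- show M ≤ sInf (S Q)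
  refine le_csInf (hSne Q) ?_
  rintro r ⟨η, ⟨hη, hηm⟩, rfl⟩
  have hconvη := hconv (fun ω => (ξ ω - η ω)^2) (hsqmem η hη)
  rw [← hkey Q hQ] at hconvη
  have hlow : ∀ n : ℕ, M - 1/((n:ℝ)+1)
      ≤ ∫ ω, ((Pn (φ n)).rnDeriv P₀ ω).toReal * (ξ ω - η ω)^2 ∂P₀ := by
    intro n
    rw [← hkey _ (hPn (φ n))]
    refine le_trans ?_ (csInf_le (hSbdd _) ⟨η, ⟨hη, hηm⟩, rfl⟩)
    refine le_trans ?_ (hFn (φ n)).le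
    have h1 : (1:ℝ)/((φ n : ℝ)+1) ≤ 1/((n:ℝ)+1) := by
      apply one_div_le_one_div_of_le (by positivity)
      have : ((n:ℝ)) ≤ (φ n : ℝ) := Nat.cast_le.mpr hφ.le_apply
      linarith
    linarith
  have htend : Tendsto (fun n : ℕ => M - 1/((n:ℝ)+1)) atTop (nhds M) := by
    have := tendsto_const_nhds (x := M) (f := atTop (α := ℕ)) |>.sub
      tendsto_one_div_add_atTop_nhds_zero_nat
    simpa using this
  exact le_of_tendsto_of_tendsto' htend hconvη hlow
end

section
/- (Uniqueness) Under the standing assumptions (ρ stable, proper, density set weakly compact and norm-bounded) and ξ ∈ L^{4+2ε}(Ω, P₀), the minimizer η̂ of η ↦ ρ((ξ−η)²) over L^{2+ε}_𝒞(P₀) is unique P₀-almost surely. -/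
open MeasureTheory ProbabilityTheory Filter
open scoped ENNReal

/-- Auxiliary: integrability, change of measure, and a uniform Hölder bound for
integrals against measures with density bounded in `L^p`. -/
lemma stmt9_key {Ω : Type*} [mΩ : MeasurableSpace Ω] (P₀ P : Measure Ω)
    [IsProbabilityMeasure P₀] [IsProbabilityMeasure P] (hac : P ≪ P₀) {p q : ℝ≥0∞}
    (hpq : (1:ℝ≥0∞)/1 = 1/p + 1/q)
    (C : ℝ≥0∞) (hC : C < ⊤) (hgC : eLpNorm (fun ω => (P.rnDeriv P₀ ω).toReal) p P₀ ≤ C)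
    (f : Ω → ℝ) (hf : MemLp f q P₀) :
    Integrable f P ∧ ∫ ω, f ω ∂P = ∫ ω, (P.rnDeriv P₀ ω).toReal * f ω ∂P₀ ∧
      ∫ ω, f ω ∂P ≤ (C * eLpNorm f q P₀).toReal := by
  set g : Ω → ℝ := fun ω => (P.rnDeriv P₀ ω).toReal with hg
  have hgmeas : Measurable g := (Measure.measurable_rnDeriv P P₀).ennreal_toReal
  have hgmem : MemLp g p P₀ := ⟨hgmeas.aestronglyMeasurable, lt_of_le_of_lt hgC hC⟩
  have hmul : MemLp (g • f) 1 P₀ := hf.smul hgmem (hpqr := ⟨by simpa [one_div] using hpq.symm⟩)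
  have hmul' : Integrable (fun ω => g ω * f ω) P₀ := memLp_one_iff_integrable.mp hmul
  have hint : Integrable f P := (integrable_rnDeriv_smul_iff hac).mp hmul'
  have heq : ∫ ω, f ω ∂P = ∫ ω, g ω * f ω ∂P₀ := by
    rw [← integral_rnDeriv_smul hac]
    simp [smul_eq_mul]
    rfl
  refine ⟨hint, heq, ?_⟩
  rw [heq]
  have h1 : ∫ ω, g ω * f ω ∂P₀ ≤ ∫ ω, ‖g ω * f ω‖ ∂P₀ :=
    le_trans (le_abs_self _) (by simpa using norm_integral_le_integral_norm (fun ω => g ω * f ω) (μ := P₀))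
  refine h1.trans ?_
  have h2 : ∫ ω, ‖g ω * f ω‖ ∂P₀ = (eLpNorm (fun ω => g ω * f ω) 1 P₀).toReal := by
    rw [integral_norm_eq_lintegral_enorm hmul'.aestronglyMeasurable, eLpNorm_one_eq_lintegral_enorm]
  rw [h2]
  have h3 : eLpNorm (fun ω => g ω * f ω) 1 P₀ ≤ eLpNorm g p P₀ * eLpNorm f q P₀ := by
    have := eLpNorm_smul_le_mul_eLpNorm (p := p) (q := q) (r := 1) (f := f) (φ := g) hf.1 hgmeas.aestronglyMeasurable (hpqr := ⟨by simpa [one_div] using hpq.symm⟩)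
    exact this
  have h4 : eLpNorm (fun ω => g ω * f ω) 1 P₀ ≤ C * eLpNorm f q P₀ :=
    h3.trans (mul_le_mul_left hgC _)
  exact ENNReal.toReal_mono (ENNReal.mul_ne_top hC.ne hf.eLpNorm_lt_top.ne) h4

/-- Uniqueness of the minimum mean square estimator: any two minimizers
of `η ↦ ρ((ξ-η)²)` over `L^{2+ε}_𝒞(P₀)` coincide `P₀`-a.s. -/
theorem stmt9 {Ω : Type*} (m : MeasurableSpace Ω) [mΩ : MeasurableSpace Ω] (hm : m ≤ mΩ)
    (P₀ : Measure Ω) [IsProbabilityMeasure P₀]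
    (ε : ℝ) (hε : ε ∈ Set.Ioo (0:ℝ) 1)
    (PP : Set (Measure Ω)) (hne : PP.Nonempty)
    (hprob : ∀ P ∈ PP, IsProbabilityMeasure P)
    -- ρ is proper: every P ∈ 𝒫 is equivalent to P₀
    (hproper : ∀ P ∈ PP, P ≪ P₀ ∧ P₀ ≪ P)
    -- stability of 𝒫: f^P / E_{P₀}[f^P | 𝒞] is again a density of a member of 𝒫
    (hstable : ∀ P ∈ PP, ∃ Q ∈ PP,
      (fun ω => (Q.rnDeriv P₀ ω).toReal) =ᵐ[P₀]
        fun ω => (P.rnDeriv P₀ ω).toReal /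
          (P₀[fun ω' => (P.rnDeriv P₀ ω').toReal | m]) ω)
    -- the density set 𝒟 is norm bounded in L^{1+2/ε}(P₀)
    (hbdd : ∃ C : ℝ≥0∞, C < ⊤ ∧ ∀ P ∈ PP,
      eLpNorm (fun ω => (P.rnDeriv P₀ ω).toReal) (ENNReal.ofReal (1 + 2/ε)) P₀ ≤ C)
    -- the density set 𝒟 is σ(L^{1+2/ε}, L^{1+ε/2})-(sequentially) compact
    (hcompact : ∀ Pn : ℕ → Measure Ω, (∀ n, Pn n ∈ PP) → ∃ φ : ℕ → ℕ, StrictMono φ ∧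
      ∃ Q ∈ PP, ∀ h : Ω → ℝ, MemLp h (ENNReal.ofReal (1 + ε/2)) P₀ →
        Tendsto (fun n => ∫ ω, ((Pn (φ n)).rnDeriv P₀ ω).toReal * h ω ∂P₀) atTop
          (nhds (∫ ω, (Q.rnDeriv P₀ ω).toReal * h ω ∂P₀)))
    (ξ : Ω → ℝ) (hξ : MemLp ξ (ENNReal.ofReal (4 + 2*ε)) P₀) :
    ∀ η₁ η₂ : Ω → ℝ,
      MemLp η₁ (ENNReal.ofReal (2+ε)) P₀ → Measurable[m] η₁ →
      MemLp η₂ (ENNReal.ofReal (2+ε)) P₀ → Measurable[m] η₂ →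
      sSup ((fun P => ∫ ω, (ξ ω - η₁ ω)^2 ∂P) '' PP) = sInf {r : ℝ | ∃ η : Ω → ℝ, (MemLp η (ENNReal.ofReal (2+ε)) P₀ ∧ Measurable[m] η) ∧ r = sSup ((fun P => ∫ ω, (ξ ω - η ω)^2 ∂P) '' PP)} →
      sSup ((fun P => ∫ ω, (ξ ω - η₂ ω)^2 ∂P) '' PP) = sInf {r : ℝ | ∃ η : Ω → ℝ, (MemLp η (ENNReal.ofReal (2+ε)) P₀ ∧ Measurable[m] η) ∧ r = sSup ((fun P => ∫ ω, (ξ ω - η ω)^2 ∂P) '' PP)} →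
      η₁ =ᵐ[P₀] η₂ := by
  obtain ⟨hε0, hε1⟩ := hε
  obtain ⟨C, hClt, hCb⟩ := hbdd
  intro η₁ η₂ hη₁ hmη₁ hη₂ hmη₂ hopt₁ hopt₂
  set p : ℝ≥0∞ := ENNReal.ofReal (1 + 2/ε) with hp
  set q : ℝ≥0∞ := ENNReal.ofReal (1 + ε/2) with hq
  set r : ℝ≥0∞ := ENNReal.ofReal (2 + ε) with hr
  -- exponent arithmetic
  have hpq : (1:ℝ≥0∞)/1 = 1/p + 1/q := by
    have h1 : (0:ℝ) < 1+2/ε := by positivity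
    have h2 : (0:ℝ) < 1+ε/2 := by positivity
    rw [hp, hq, one_div, one_div, one_div, ← ENNReal.ofReal_inv_of_pos h1,
      ← ENNReal.ofReal_inv_of_pos h2, ← ENNReal.ofReal_add (by positivity) (by positivity)]
    have : (1+2/ε)⁻¹ + (1+ε/2)⁻¹ = 1 := by
      have : ε ≠ 0 := ne_of_gt hε0
      field_simp; ring
    rw [this, ENNReal.ofReal_one, inv_one]
  have hqr : (1:ℝ≥0∞)/q = 1/r + 1/r := by
    have h1 : (0:ℝ) < 1+ε/2 := by positivity
    have h2 : (0:ℝ) < 2+ε := by positivity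
    rw [hq, hr]
    simp only [one_div]
    rw [← ENNReal.ofReal_inv_of_pos h1, ← ENNReal.ofReal_inv_of_pos h2,
      ← ENNReal.ofReal_add (by positivity) (by positivity)]
    congr 1
    have : (2:ℝ)+ε ≠ 0 := ne_of_gt h2
    field_simp
    ring
  -- ξ is in L^{2+ε}
  have hξ' : MemLp ξ r P₀ :=
    hξ.mono_exponent (ENNReal.ofReal_le_ofReal (by linarith))
  -- squares of differences are in L^q
  have hsq : ∀ η : Ω → ℝ, MemLp η r P₀ → MemLp (fun ω => (ξ ω - η ω)^2) q P₀ := by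
    intro η hη
    have hd : MemLp (fun ω => ξ ω - η ω) r P₀ := hξ'.sub hη
    have := hd.smul hd (hpqr := ⟨by simpa [one_div] using hqr.symm⟩)
    have heq : (fun ω => (ξ ω - η ω)^2) = fun ω => (ξ ω - η ω) * (ξ ω - η ω) := by
      funext ω; ring
    rw [heq]; exact this
  have hDmem : MemLp (fun ω => (η₁ ω - η₂ ω)^2) q P₀ := by
    have hd : MemLp (fun ω => η₁ ω - η₂ ω) r P₀ := hη₁.sub hη₂
    have := hd.smul hd (hpqr := ⟨by simpa [one_div] using hqr.symm⟩)
    have heq : (fun ω => (η₁ ω - η₂ ω)^2) = fun ω => (η₁ ω - η₂ ω) * (η₁ ω - η₂ ω) := by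
      funext ω; ring
    rw [heq]; exact this
  -- the key facts, per measure in PP
  have key : ∀ P ∈ PP, ∀ f : Ω → ℝ, MemLp f q P₀ →
      Integrable f P ∧ ∫ ω, f ω ∂P = ∫ ω, (P.rnDeriv P₀ ω).toReal * f ω ∂P₀ ∧
      ∫ ω, f ω ∂P ≤ (C * eLpNorm f q P₀).toReal := by
    intro P hP f hf
    haveI := hprob P hP
    exact stmt9_key P₀ P (hproper P hP).1 hpq C hClt (hCb P hP) f hf
  -- the candidate sets
  set S : (Ω → ℝ) → Set ℝ := fun η => (fun P => ∫ ω, (ξ ω - η ω)^2 ∂P) '' PP with hS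
  have hSne : ∀ η, (S η).Nonempty := fun η => hne.image _
  have hSbdd : ∀ η : Ω → ℝ, MemLp η r P₀ → BddAbove (S η) := by
    intro η hη
    refine ⟨(C * eLpNorm (fun ω => (ξ ω - η ω)^2) q P₀).toReal, ?_⟩
    rintro x ⟨P, hP, rfl⟩
    exact (key P hP _ (hsq η hη)).2.2
  set T : Set ℝ := {r : ℝ | ∃ η : Ω → ℝ, (MemLp η (ENNReal.ofReal (2+ε)) P₀ ∧ Measurable[m] η) ∧
      r = sSup ((fun P => ∫ ω, (ξ ω - η ω)^2 ∂P) '' PP)} with hT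
  have hTbdd : BddBelow T := by
    refine ⟨0, ?_⟩
    rintro x ⟨η, hη, rfl⟩
    exact Real.sSup_nonneg (by rintro x ⟨P, hP, rfl⟩; exact integral_nonneg fun ω => sq_nonneg _)
  set v : ℝ := sInf T with hv
  -- the midpoint
  set η₃ : Ω → ℝ := fun ω => (η₁ ω + η₂ ω)/2 with hη₃def
  have hη₃ : MemLp η₃ r P₀ := by
    have := (hη₁.add hη₂).const_mul (1/2 : ℝ)
    have heq : η₃ = fun ω => (1/2 : ℝ) * (η₁ ω + η₂ ω) := by funext ω; rw [hη₃def]; ring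
    rw [heq]; exact this
  have hmη₃ : Measurable[m] η₃ := (hmη₁.add hmη₂).div_const 2
  have hvle : v ≤ sSup (S η₃) := csInf_le hTbdd ⟨η₃, ⟨hη₃, hmη₃⟩, rfl⟩
  -- bounds on values of the two minimizers
  have hub₁ : ∀ P ∈ PP, ∫ ω, (ξ ω - η₁ ω)^2 ∂P ≤ v := by
    intro P hP
    calc ∫ ω, (ξ ω - η₁ ω)^2 ∂P ≤ sSup (S η₁) := le_csSup (hSbdd η₁ hη₁) ⟨P, hP, rfl⟩
    _ = v := hopt₁
  have hub₂ : ∀ P ∈ PP, ∫ ω, (ξ ω - η₂ ω)^2 ∂P ≤ v := by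
    intro P hP
    calc ∫ ω, (ξ ω - η₂ ω)^2 ∂P ≤ sSup (S η₂) := le_csSup (hSbdd η₂ hη₂) ⟨P, hP, rfl⟩
    _ = v := hopt₂
  -- for each n, find P ∈ PP with small ∫ (η₁ - η₂)² dP
  have main : ∀ n : ℕ, ∃ P ∈ PP, ∫ ω, (η₁ ω - η₂ ω)^2 ∂P < 4/((n:ℝ)+1) := by
    intro n
    have hpos : (0:ℝ) < 1/((n:ℝ)+1) := by positivity
    have hlt : v - 1/((n:ℝ)+1) < sSup (S η₃) := by linarith
    obtain ⟨x, hx, hxlt⟩ := exists_lt_of_lt_csSup (hSne η₃) hlt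
    obtain ⟨P, hP, rfl⟩ := hx
    have hxlt' : v - 1/((n:ℝ)+1) < ∫ ω, (ξ ω - η₃ ω)^2 ∂P := hxlt
    refine ⟨P, hP, ?_⟩
    -- split the integral
    have hiA := (key P hP _ (hsq η₁ hη₁)).1
    have hiB := (key P hP _ (hsq η₂ hη₂)).1
    have hiD := (key P hP _ hDmem).1
    have hiA2 : Integrable (fun ω => (1/2 : ℝ) * (ξ ω - η₁ ω)^2) P := hiA.const_mul _
    have hiB2 : Integrable (fun ω => (1/2 : ℝ) * (ξ ω - η₂ ω)^2) P := hiB.const_mul _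
    have hiD2 : Integrable (fun ω => (1/4 : ℝ) * (η₁ ω - η₂ ω)^2) P := hiD.const_mul _
    have hiAB : Integrable (fun ω => (1/2 : ℝ) * (ξ ω - η₁ ω)^2 + (1/2 : ℝ) * (ξ ω - η₂ ω)^2) P :=
      hiA2.add hiB2
    have hsplit : ∫ ω, (ξ ω - η₃ ω)^2 ∂P
        = (1/2) * ∫ ω, (ξ ω - η₁ ω)^2 ∂P + (1/2) * ∫ ω, (ξ ω - η₂ ω)^2 ∂P
          - (1/4) * ∫ ω, (η₁ ω - η₂ ω)^2 ∂P := by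
      have heq : (fun ω => (ξ ω - η₃ ω)^2)
          = fun ω => (1/2) * (ξ ω - η₁ ω)^2 + (1/2) * (ξ ω - η₂ ω)^2
            - (1/4) * (η₁ ω - η₂ ω)^2 := by
        funext ω; rw [hη₃def]; ring
      rw [heq, integral_sub hiAB hiD2, integral_add hiA2 hiB2, integral_const_mul,
        integral_const_mul, integral_const_mul]
    rw [hsplit] at hxlt'
    have h1 := hub₁ P hP
    have h2 := hub₂ P hP
    have h4 : (4:ℝ)/((n:ℝ)+1) = 4*(1/((n:ℝ)+1)) := by ring
    linarith
  choose Pn hPPn hPn using main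
  obtain ⟨φ, hφ, Q, hQ, hconv⟩ := hcompact Pn hPPn
  have hconvD := hconv (fun ω => (η₁ ω - η₂ ω)^2) hDmem
  -- the sequence of integrals tends to 0
  have hterm : ∀ n, ∫ ω, ((Pn (φ n)).rnDeriv P₀ ω).toReal * (η₁ ω - η₂ ω)^2 ∂P₀
      = ∫ ω, (η₁ ω - η₂ ω)^2 ∂(Pn (φ n)) :=
    fun n => ((key _ (hPPn (φ n)) _ hDmem).2.1).symm
  have hzero : Tendsto (fun n => ∫ ω, ((Pn (φ n)).rnDeriv P₀ ω).toReal * (η₁ ω - η₂ ω)^2 ∂P₀)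
      atTop (nhds 0) := by
    have hg0 : Tendsto (fun n : ℕ => (4:ℝ)/((n:ℝ)+1)) atTop (nhds 0) := by
      have h := tendsto_one_div_add_atTop_nhds_zero_nat (𝕜 := ℝ)
      have h2 := h.const_mul (4:ℝ)
      rw [mul_zero] at h2
      convert h2 using 2 with n
      ring
    refine tendsto_of_tendsto_of_tendsto_of_le_of_le (g := fun _ => (0:ℝ))
      tendsto_const_nhds hg0 (fun n => ?_) (fun n => ?_)
    · rw [hterm n]
      exact integral_nonneg fun ω => sq_nonneg _
    · rw [hterm n]
      refine le_trans (hPn (φ n)).le ?_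
      have h0 : (n:ℝ) ≤ (φ n : ℝ) := by exact_mod_cast hφ.le_apply
      have h1 : ((n:ℝ)+1) ≤ ((φ n : ℝ)+1) := by linarith
      exact div_le_div_of_nonneg_left (by norm_num) (by positivity) h1
  have hQ0 : ∫ ω, (Q.rnDeriv P₀ ω).toReal * (η₁ ω - η₂ ω)^2 ∂P₀ = 0 :=
    tendsto_nhds_unique hconvD hzero
  have hQint : ∫ ω, (η₁ ω - η₂ ω)^2 ∂Q = 0 := by
    rw [(key Q hQ _ hDmem).2.1, hQ0]
  have hQae : (fun ω => (η₁ ω - η₂ ω)^2) =ᵐ[Q] 0 :=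
    (integral_eq_zero_iff_of_nonneg (fun ω => sq_nonneg _) (key Q hQ _ hDmem).1).mp hQint
  have hP₀ae : (fun ω => (η₁ ω - η₂ ω)^2) =ᵐ[P₀] 0 :=
    (hproper Q hQ).2.ae_eq hQae
  filter_upwards [hP₀ae] with ω hω
  have : (η₁ ω - η₂ ω)^2 = 0 := hω
  have := sq_eq_zero_iff.mp this
  linarith
end

section
/- (Homogeneity) Under the standing assumptions, for every ξ ∈ L^{4+2ε}(Ω, P₀) and every λ ∈ ℝ (including negative λ), ρ(λξ | 𝒞) = λ ρ(ξ | 𝒞) P₀-a.s., where ρ(·|𝒞) denotes the minimum mean square estimator. -/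
open MeasureTheory ProbabilityTheory Filter
open scoped ENNReal Pointwise

lemma stmt14_conj1 {ε : ℝ} (hε : 0 < ε) :
    1 / ENNReal.ofReal (1 + 2/ε) + 1 / ENNReal.ofReal (1 + ε/2) = 1 / (1 : ℝ≥0∞) := by
  have h1 : (0:ℝ) < 1 + 2/ε := by positivity
  have h2 : (0:ℝ) < 1 + ε/2 := by positivity
  rw [one_div, one_div, ← ENNReal.ofReal_inv_of_pos h1, ← ENNReal.ofReal_inv_of_pos h2,
    ← ENNReal.ofReal_add (by positivity) (by positivity)]
  have h3 : (1 + 2/ε)⁻¹ + (1 + ε/2)⁻¹ = 1 := by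
    field_simp
    ring
  rw [h3]; simp

lemma stmt14_conj2 {ε : ℝ} (hε : 0 < ε) :
    1 / ENNReal.ofReal (1 + ε/2) = 1 / ENNReal.ofReal (2 + ε) + 1 / ENNReal.ofReal (2 + ε) := by
  have h1 : (0:ℝ) < 1 + ε/2 := by positivity
  have h2 : (0:ℝ) < 2 + ε := by positivity
  rw [one_div, one_div, ← ENNReal.ofReal_inv_of_pos h1, ← ENNReal.ofReal_inv_of_pos h2,
    ← ENNReal.ofReal_add (by positivity) (by positivity)]
  congr 1
  field_simp
  ring

set_option maxHeartbeats 1000000 in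
lemma stmt14_uniq {Ω : Type*} (m : MeasurableSpace Ω) [mΩ : MeasurableSpace Ω]
    (P₀ : Measure Ω) [IsProbabilityMeasure P₀]
    (ε : ℝ) (hε : ε ∈ Set.Ioo (0:ℝ) 1)
    (PP : Set (Measure Ω)) (hne : PP.Nonempty)
    (hprob : ∀ P ∈ PP, IsProbabilityMeasure P)
    (hproper : ∀ P ∈ PP, P ≪ P₀ ∧ P₀ ≪ P)
    (hbdd : ∃ C : ℝ≥0∞, C < ⊤ ∧ ∀ P ∈ PP,
      eLpNorm (fun ω => (P.rnDeriv P₀ ω).toReal) (ENNReal.ofReal (1 + 2/ε)) P₀ ≤ C)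
    (hcompact : ∀ Pn : ℕ → Measure Ω, (∀ n, Pn n ∈ PP) → ∃ φ : ℕ → ℕ, StrictMono φ ∧
      ∃ Q ∈ PP, ∀ h : Ω → ℝ, MemLp h (ENNReal.ofReal (1 + ε/2)) P₀ →
        Tendsto (fun n => ∫ ω, ((Pn (φ n)).rnDeriv P₀ ω).toReal * h ω ∂P₀) atTop
          (nhds (∫ ω, (Q.rnDeriv P₀ ω).toReal * h ω ∂P₀)))
    (ζ : Ω → ℝ) (hζ : MemLp ζ (ENNReal.ofReal (2+ε)) P₀)
    (η₁ η₂ : Ω → ℝ)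
    (h₁mem : MemLp η₁ (ENNReal.ofReal (2+ε)) P₀) (h₁meas : Measurable[m] η₁)
    (h₂mem : MemLp η₂ (ENNReal.ofReal (2+ε)) P₀) (h₂meas : Measurable[m] η₂)
    (hv₁ : sSup ((fun P => ∫ ω, (ζ ω - η₁ ω)^2 ∂P) '' PP) = sInf {r : ℝ | ∃ η : Ω → ℝ,
      (MemLp η (ENNReal.ofReal (2+ε)) P₀ ∧ Measurable[m] η) ∧
      r = sSup ((fun P => ∫ ω, (ζ ω - η ω)^2 ∂P) '' PP)})
    (hv₂ : sSup ((fun P => ∫ ω, (ζ ω - η₂ ω)^2 ∂P) '' PP) = sInf {r : ℝ | ∃ η : Ω → ℝ,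
      (MemLp η (ENNReal.ofReal (2+ε)) P₀ ∧ Measurable[m] η) ∧
      r = sSup ((fun P => ∫ ω, (ζ ω - η ω)^2 ∂P) '' PP)}) :
    η₁ =ᵐ[P₀] η₂ := by
  obtain ⟨C, hC, hCb⟩ := hbdd
  have hεpos : (0:ℝ) < ε := hε.1
  -- densities are in L^{1+2/ε}
  have hfmem : ∀ P ∈ PP, MemLp (fun ω => (P.rnDeriv P₀ ω).toReal)
      (ENNReal.ofReal (1 + 2/ε)) P₀ := fun P hP =>
    ⟨(Measure.measurable_rnDeriv P P₀).ennreal_toReal.aestronglyMeasurable,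
      lt_of_le_of_lt (hCb P hP) hC⟩
  -- products of L^{2+ε} functions are in L^{1+ε/2}
  have hsq : ∀ {a : Ω → ℝ}, MemLp a (ENNReal.ofReal (2+ε)) P₀ →
      MemLp (fun ω => (a ω)^2) (ENNReal.ofReal (1+ε/2)) P₀ := by
    intro a ha
    have h := MemLp.smul (𝕜 := ℝ) (E := ℝ) (μ := P₀) (f := a) (φ := a) (p := ENNReal.ofReal (2+ε)) (q := ENNReal.ofReal (2+ε)) (r := ENNReal.ofReal (1+ε/2)) ha ha (hpqr := ⟨by simpa only [one_div] using (stmt14_conj2 hεpos).symm⟩)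
    have he : (a • a) = fun ω => (a ω)^2 := by funext ω; simp [pow_two]
    rwa [he] at h
  -- integrability, representation, and uniform bound for L^{1+ε/2} integrands
  have hint : ∀ (g : Ω → ℝ), MemLp g (ENNReal.ofReal (1+ε/2)) P₀ → ∀ P ∈ PP,
      Integrable g P ∧ (∫ ω, g ω ∂P = ∫ ω, (P.rnDeriv P₀ ω).toReal * g ω ∂P₀) ∧
      ∫ ω, g ω ∂P ≤ (C * eLpNorm g (ENNReal.ofReal (1+ε/2)) P₀).toReal := by
    intro g hg P hP
    have hPac := (hproper P hP).1
    haveI := hprob P hP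
    have hfP := hfmem P hP
    have hL1 : MemLp (fun ω => (P.rnDeriv P₀ ω).toReal • g ω) 1 P₀ := by
      have h := MemLp.smul (𝕜 := ℝ) (E := ℝ) (μ := P₀) (f := g) (φ := fun ω => (P.rnDeriv P₀ ω).toReal) hg hfP (p := ENNReal.ofReal (1 + 2/ε)) (q := ENNReal.ofReal (1 + ε/2)) (r := 1) (hpqr := ⟨by simpa only [one_div] using stmt14_conj1 hεpos⟩)
      exact h
    have hI1 : Integrable (fun ω => (P.rnDeriv P₀ ω).toReal • g ω) P₀ :=
      memLp_one_iff_integrable.mp hL1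
    have hIg : Integrable g P := (integrable_rnDeriv_smul_iff hPac).mp hI1
    have hrepr : ∫ ω, g ω ∂P = ∫ ω, (P.rnDeriv P₀ ω).toReal * g ω ∂P₀ := by
      rw [← integral_rnDeriv_smul hPac]
      simp [smul_eq_mul]
    refine ⟨hIg, hrepr, ?_⟩
    have hb1 : ∫ ω, (P.rnDeriv P₀ ω).toReal * g ω ∂P₀ ≤
        ∫ ω, ‖(P.rnDeriv P₀ ω).toReal • g ω‖ ∂P₀ := by
      refine le_trans (le_abs_self _) ?_
      rw [← Real.norm_eq_abs]
      exact norm_integral_le_integral_norm _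
    have hb2 : ENNReal.ofReal (∫ ω, ‖(P.rnDeriv P₀ ω).toReal • g ω‖ ∂P₀) =
        eLpNorm (fun ω => (P.rnDeriv P₀ ω).toReal • g ω) 1 P₀ := by
      rw [eLpNorm_one_eq_lintegral_enorm, ofReal_integral_norm_eq_lintegral_enorm hI1]
    have hb3 : eLpNorm (fun ω => (P.rnDeriv P₀ ω).toReal • g ω) 1 P₀ ≤
        C * eLpNorm g (ENNReal.ofReal (1+ε/2)) P₀ := by
      refine le_trans (eLpNorm_smul_le_mul_eLpNorm (𝕜 := ℝ) (E := ℝ) (μ := P₀) (f := g) (φ := fun ω => (P.rnDeriv P₀ ω).toReal) hg.1 hfP.1 (p := ENNReal.ofReal (1 + 2/ε)) (q := ENNReal.ofReal (1 + ε/2)) (r := 1) (hpqr := ⟨by simpa only [one_div] using stmt14_conj1 hεpos⟩)) ?_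
      exact mul_le_mul_left (hCb P hP) _
    have hfin : C * eLpNorm g (ENNReal.ofReal (1+ε/2)) P₀ ≠ ⊤ :=
      ENNReal.mul_ne_top hC.ne hg.eLpNorm_lt_top.ne
    calc ∫ ω, g ω ∂P = ∫ ω, (P.rnDeriv P₀ ω).toReal * g ω ∂P₀ := hrepr
      _ ≤ ∫ ω, ‖(P.rnDeriv P₀ ω).toReal • g ω‖ ∂P₀ := hb1
      _ = (ENNReal.ofReal (∫ ω, ‖(P.rnDeriv P₀ ω).toReal • g ω‖ ∂P₀)).toReal := by
          rw [ENNReal.toReal_ofReal (integral_nonneg fun ω => norm_nonneg _)]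
      _ ≤ (C * eLpNorm g (ENNReal.ofReal (1+ε/2)) P₀).toReal := by
          refine ENNReal.toReal_mono hfin ?_
          rw [hb2]; exact hb3
  -- membership facts
  have hmζ : ∀ {η : Ω → ℝ}, MemLp η (ENNReal.ofReal (2+ε)) P₀ →
      MemLp (fun ω => (ζ ω - η ω)^2) (ENNReal.ofReal (1+ε/2)) P₀ := by
    intro η hη
    have h := hsq (hζ.sub hη)
    exact h
  have hg1mem := hmζ h₁mem
  have hg2mem := hmζ h₂mem
  have hDmem : MemLp (fun ω => (η₁ ω - η₂ ω)^2) (ENNReal.ofReal (1+ε/2)) P₀ := by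
    have h := hsq (h₁mem.sub h₂mem)
    exact h
  -- the sup-sets are bounded above and consist of nonnegative numbers
  have hbddA : ∀ (η : Ω → ℝ), MemLp (fun ω => (ζ ω - η ω)^2) (ENNReal.ofReal (1+ε/2)) P₀ →
      BddAbove ((fun P => ∫ ω, (ζ ω - η ω)^2 ∂P) '' PP) := by
    intro η hη
    refine ⟨(C * eLpNorm (fun ω => (ζ ω - η ω)^2) (ENNReal.ofReal (1+ε/2)) P₀).toReal, ?_⟩
    rintro r ⟨P, hP, rfl⟩
    exact (hint _ hη P hP).2.2
  have hSnonneg : ∀ (η : Ω → ℝ), 0 ≤ sSup ((fun P => ∫ ω, (ζ ω - η ω)^2 ∂P) '' PP) := by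
    intro η
    refine Real.sSup_nonneg ?_
    rintro r ⟨P, hP, rfl⟩
    exact integral_nonneg fun ω => sq_nonneg _
  set SET := {r : ℝ | ∃ η : Ω → ℝ, (MemLp η (ENNReal.ofReal (2+ε)) P₀ ∧ Measurable[m] η) ∧
      r = sSup ((fun P => ∫ ω, (ζ ω - η ω)^2 ∂P) '' PP)} with hSETdef
  have hbb : BddBelow SET := by
    refine ⟨0, ?_⟩
    rintro r ⟨η, _, rfl⟩
    exact hSnonneg η
  -- the midpoint
  set md : Ω → ℝ := fun ω => 2⁻¹ * (η₁ ω + η₂ ω) with hmddef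
  have hmdmem : MemLp md (ENNReal.ofReal (2+ε)) P₀ := (h₁mem.add h₂mem).const_mul 2⁻¹
  have hmdmeas : Measurable[m] md := (Measurable.add h₁meas h₂meas).const_mul 2⁻¹
  -- parallelogram identity
  have hpar : ∀ P ∈ PP, ∫ ω, (ζ ω - md ω)^2 ∂P =
      2⁻¹ * ∫ ω, (ζ ω - η₁ ω)^2 ∂P + 2⁻¹ * ∫ ω, (ζ ω - η₂ ω)^2 ∂P
        - 4⁻¹ * ∫ ω, (η₁ ω - η₂ ω)^2 ∂P := by
    intro P hP
    have i₁ : Integrable (fun ω => (ζ ω - η₁ ω)^2) P := (hint _ hg1mem P hP).1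
    have i₂ : Integrable (fun ω => (ζ ω - η₂ ω)^2) P := (hint _ hg2mem P hP).1
    have iD : Integrable (fun ω => (η₁ ω - η₂ ω)^2) P := (hint _ hDmem P hP).1
    have hpt : (fun ω => (ζ ω - md ω)^2) = fun ω =>
        2⁻¹ * (ζ ω - η₁ ω)^2 + 2⁻¹ * (ζ ω - η₂ ω)^2 - 4⁻¹ * (η₁ ω - η₂ ω)^2 := by
      funext ω
      simp only [hmddef]
      ring
    have iA : Integrable (fun ω => 2⁻¹ * (ζ ω - η₁ ω)^2) P := i₁.const_mul _
    have iB : Integrable (fun ω => 2⁻¹ * (ζ ω - η₂ ω)^2) P := i₂.const_mul _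
    have iC : Integrable (fun ω => 4⁻¹ * (η₁ ω - η₂ ω)^2) P := iD.const_mul _
    have iAB : Integrable (fun ω => 2⁻¹ * (ζ ω - η₁ ω)^2 + 2⁻¹ * (ζ ω - η₂ ω)^2) P := iA.add iB
    have e1 : ∫ ω, (2⁻¹ * (ζ ω - η₁ ω)^2 + 2⁻¹ * (ζ ω - η₂ ω)^2 - 4⁻¹ * (η₁ ω - η₂ ω)^2) ∂P
        = (∫ ω, (2⁻¹ * (ζ ω - η₁ ω)^2 + 2⁻¹ * (ζ ω - η₂ ω)^2) ∂P)
          - ∫ ω, 4⁻¹ * (η₁ ω - η₂ ω)^2 ∂P := integral_sub iAB iC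
    have e2 : ∫ ω, (2⁻¹ * (ζ ω - η₁ ω)^2 + 2⁻¹ * (ζ ω - η₂ ω)^2) ∂P
        = (∫ ω, 2⁻¹ * (ζ ω - η₁ ω)^2 ∂P) + ∫ ω, 2⁻¹ * (ζ ω - η₂ ω)^2 ∂P := integral_add iA iB
    rw [hpt, e1, e2, integral_const_mul, integral_const_mul, integral_const_mul]
  -- both minimizers attain V := sInf SET as upper bound of their integrals
  have h₁le : ∀ P ∈ PP, ∫ ω, (ζ ω - η₁ ω)^2 ∂P ≤ sInf SET := by
    intro P hP
    rw [← hv₁]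
    exact le_csSup (hbddA η₁ hg1mem) ⟨P, hP, rfl⟩
  have h₂le : ∀ P ∈ PP, ∫ ω, (ζ ω - η₂ ω)^2 ∂P ≤ sInf SET := by
    intro P hP
    rw [← hv₂]
    exact le_csSup (hbddA η₂ hg2mem) ⟨P, hP, rfl⟩
  have hVmd : sInf SET ≤ sSup ((fun P => ∫ ω, (ζ ω - md ω)^2 ∂P) '' PP) :=
    csInf_le hbb ⟨md, ⟨hmdmem, hmdmeas⟩, rfl⟩
  -- a minimizing sequence for the distance between the two minimizers
  have hseq : ∀ n : ℕ, ∃ P ∈ PP, ∫ ω, (η₁ ω - η₂ ω)^2 ∂P < 4/(n+1) := by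
    intro n
    have hpos : (0:ℝ) < 1/((n:ℝ)+1) := by positivity
    have hlt : sInf SET - 1/((n:ℝ)+1) <
        sSup ((fun P => ∫ ω, (ζ ω - md ω)^2 ∂P) '' PP) := by linarith
    obtain ⟨r, ⟨P, hP, rfl⟩, hr⟩ := exists_lt_of_lt_csSup (hne.image _) hlt
    refine ⟨P, hP, ?_⟩
    have hp := hpar P hP
    have h1 := h₁le P hP
    have h2 := h₂le P hP
    have h4 : (4:ℝ)/((n:ℝ)+1) = 4 * (1/((n:ℝ)+1)) := by ring
    rw [h4]
    linarith
  choose Pn hPn hPn2 using hseq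
  have hDnn : ∀ n : ℕ, 0 ≤ ∫ ω, (η₁ ω - η₂ ω)^2 ∂(Pn n) :=
    fun n => integral_nonneg fun ω => sq_nonneg _
  have h4tend : Tendsto (fun n : ℕ => (4:ℝ)/((n:ℝ)+1)) atTop (nhds 0) := by
    have h := tendsto_one_div_add_atTop_nhds_zero_nat.const_mul (4:ℝ)
    simp only [mul_zero] at h
    refine h.congr fun n => ?_
    ring
  have hDtend : Tendsto (fun n => ∫ ω, (η₁ ω - η₂ ω)^2 ∂(Pn n)) atTop (nhds 0) :=
    squeeze_zero hDnn (fun n => (hPn2 n).le) h4tend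
  obtain ⟨φ, hφ, Q, hQ, hconv⟩ := hcompact Pn hPn
  have hlim := hconv _ hDmem
  have hlim' : Tendsto (fun n => ∫ ω, (η₁ ω - η₂ ω)^2 ∂(Pn (φ n))) atTop
      (nhds (∫ ω, (Q.rnDeriv P₀ ω).toReal * (η₁ ω - η₂ ω)^2 ∂P₀)) :=
    hlim.congr fun n => ((hint _ hDmem _ (hPn (φ n))).2.1).symm
  have hsubseq : Tendsto (fun n => ∫ ω, (η₁ ω - η₂ ω)^2 ∂(Pn (φ n))) atTop (nhds 0) :=
    hDtend.comp hφ.tendsto_atTop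
  have hQ0 : ∫ ω, (η₁ ω - η₂ ω)^2 ∂Q = 0 := by
    rw [(hint _ hDmem Q hQ).2.1]
    exact tendsto_nhds_unique hlim' hsubseq
  have hae : (fun ω => (η₁ ω - η₂ ω)^2) =ᵐ[Q] 0 :=
    (integral_eq_zero_iff_of_nonneg (fun ω => sq_nonneg _) (hint _ hDmem Q hQ).1).mp hQ0
  have haeQ : η₁ =ᵐ[Q] η₂ := by
    filter_upwards [hae] with ω h
    have h' : (η₁ ω - η₂ ω)^2 = 0 := h
    exact sub_eq_zero.mp (sq_eq_zero_iff.mp h')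
  exact haeQ.filter_mono (hproper Q hQ).2.ae_le

lemma stmt14_sSup_image_mul (c : ℝ) (hc : 0 ≤ c) (s : Set ℝ) :
    sSup ((fun x => c * x) '' s) = c * sSup s := by
  have h : (fun x : ℝ => c * x) '' s = c • s := by
    simp only [← smul_eq_mul]
    exact Set.image_smul
  rw [h, Real.sSup_smul_of_nonneg hc, smul_eq_mul]

/-- Full homogeneity: for every real `λ` (including negative ones),
`ρ(λξ|𝒞) = λ·ρ(ξ|𝒞)` `P₀`-a.s. -/
theorem stmt14 {Ω : Type*} (m : MeasurableSpace Ω) [mΩ : MeasurableSpace Ω] (hm : m ≤ mΩ)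
    (P₀ : Measure Ω) [IsProbabilityMeasure P₀]
    (ε : ℝ) (hε : ε ∈ Set.Ioo (0:ℝ) 1)
    (PP : Set (Measure Ω)) (hne : PP.Nonempty)
    (hprob : ∀ P ∈ PP, IsProbabilityMeasure P)
    -- ρ is proper: every P ∈ 𝒫 is equivalent to P₀
    (hproper : ∀ P ∈ PP, P ≪ P₀ ∧ P₀ ≪ P)
    -- stability of 𝒫: f^P / E_{P₀}[f^P | 𝒞] is again a density of a member of 𝒫
    (hstable : ∀ P ∈ PP, ∃ Q ∈ PP,
      (fun ω => (Q.rnDeriv P₀ ω).toReal) =ᵐ[P₀]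
        fun ω => (P.rnDeriv P₀ ω).toReal /
          (P₀[fun ω' => (P.rnDeriv P₀ ω').toReal | m]) ω)
    -- the density set 𝒟 is norm bounded in L^{1+2/ε}(P₀)
    (hbdd : ∃ C : ℝ≥0∞, C < ⊤ ∧ ∀ P ∈ PP,
      eLpNorm (fun ω => (P.rnDeriv P₀ ω).toReal) (ENNReal.ofReal (1 + 2/ε)) P₀ ≤ C)
    -- the density set 𝒟 is σ(L^{1+2/ε}, L^{1+ε/2})-(sequentially) compact
    (hcompact : ∀ Pn : ℕ → Measure Ω, (∀ n, Pn n ∈ PP) → ∃ φ : ℕ → ℕ, StrictMono φ ∧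
      ∃ Q ∈ PP, ∀ h : Ω → ℝ, MemLp h (ENNReal.ofReal (1 + ε/2)) P₀ →
        Tendsto (fun n => ∫ ω, ((Pn (φ n)).rnDeriv P₀ ω).toReal * h ω ∂P₀) atTop
          (nhds (∫ ω, (Q.rnDeriv P₀ ω).toReal * h ω ∂P₀)))
    (ξ : Ω → ℝ) (hξ : MemLp ξ (ENNReal.ofReal (4 + 2*ε)) P₀)
    (lam : ℝ) :
    ∀ ηhat η' : Ω → ℝ,
      MemLp ηhat (ENNReal.ofReal (2+ε)) P₀ → Measurable[m] ηhat →
      MemLp η' (ENNReal.ofReal (2+ε)) P₀ → Measurable[m] η' →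
      sSup ((fun P => ∫ ω, (ξ ω - ηhat ω)^2 ∂P) '' PP) = sInf {r : ℝ | ∃ η : Ω → ℝ, (MemLp η (ENNReal.ofReal (2+ε)) P₀ ∧ Measurable[m] η) ∧ r = sSup ((fun P => ∫ ω, (ξ ω - η ω)^2 ∂P) '' PP)} →
      sSup ((fun P => ∫ ω, ((fun w => lam * ξ w) ω - η' ω)^2 ∂P) '' PP) = sInf {r : ℝ | ∃ η : Ω → ℝ, (MemLp η (ENNReal.ofReal (2+ε)) P₀ ∧ Measurable[m] η) ∧ r = sSup ((fun P => ∫ ω, ((fun w => lam * ξ w) ω - η ω)^2 ∂P) '' PP)} →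
      η' =ᵐ[P₀] (fun ω => lam * ηhat ω) := by
  intro ηhat η' hhm hhmeas hh'm hh'meas hmin hmin'
  have hεpos : (0:ℝ) < ε := hε.1
  have hle24 : ENNReal.ofReal (2+ε) ≤ ENNReal.ofReal (4 + 2*ε) :=
    ENNReal.ofReal_le_ofReal (by linarith)
  have hξ2 : MemLp ξ (ENNReal.ofReal (2+ε)) P₀ := hξ.mono_exponent hle24
  have hζ : MemLp (fun w => lam * ξ w) (ENNReal.ofReal (2+ε)) P₀ := hξ2.const_mul lam
  have hlamhat_mem : MemLp (fun ω => lam * ηhat ω) (ENNReal.ofReal (2+ε)) P₀ :=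
    hhm.const_mul lam
  have hlamhat_meas : Measurable[m] (fun ω => lam * ηhat ω) := hhmeas.const_mul lam
  -- scaling identity: S_λ(λ·η) = λ² S(η)
  have hscale : ∀ η : Ω → ℝ,
      sSup ((fun P => ∫ ω, (lam * ξ ω - lam * η ω)^2 ∂P) '' PP)
        = lam^2 * sSup ((fun P => ∫ ω, (ξ ω - η ω)^2 ∂P) '' PP) := by
    intro η
    have h1 : (fun P : Measure Ω => ∫ ω, (lam * ξ ω - lam * η ω)^2 ∂P)
        = (fun x => lam^2 * x) ∘ (fun P : Measure Ω => ∫ ω, (ξ ω - η ω)^2 ∂P) := by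
      funext P
      have hpt : (fun ω => (lam * ξ ω - lam * η ω)^2)
          = fun ω => lam^2 * (ξ ω - η ω)^2 := by
        funext ω; ring
      simp only [Function.comp_apply]
      rw [hpt, integral_const_mul]
    rw [h1, Set.image_comp, stmt14_sSup_image_mul _ (sq_nonneg lam)]
  -- scaling identity with general η, for lam ≠ 0
  have hscale' : lam ≠ 0 → ∀ η : Ω → ℝ,
      sSup ((fun P => ∫ ω, (lam * ξ ω - η ω)^2 ∂P) '' PP)
        = lam^2 * sSup ((fun P => ∫ ω, (ξ ω - lam⁻¹ * η ω)^2 ∂P) '' PP) := by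
    intro hlam η
    have h1 : (fun P : Measure Ω => ∫ ω, (lam * ξ ω - η ω)^2 ∂P)
        = (fun x => lam^2 * x) ∘ (fun P : Measure Ω => ∫ ω, (ξ ω - lam⁻¹ * η ω)^2 ∂P) := by
      funext P
      have hpt : (fun ω => (lam * ξ ω - η ω)^2)
          = fun ω => lam^2 * (ξ ω - lam⁻¹ * η ω)^2 := by
        funext ω
        have h2 : lam * (lam⁻¹ * η ω) = η ω := by
          field_simp
        calc (lam * ξ ω - η ω)^2 = (lam * (ξ ω - lam⁻¹ * η ω))^2 := by rw [mul_sub, h2]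
          _ = lam^2 * (ξ ω - lam⁻¹ * η ω)^2 := by ring
      simp only [Function.comp_apply]
      rw [hpt, integral_const_mul]
    rw [h1, Set.image_comp, stmt14_sSup_image_mul _ (sq_nonneg lam)]
  -- nonnegativity facts for both inf-sets
  have hSnonneg : ∀ (ζ η : Ω → ℝ), 0 ≤ sSup ((fun P => ∫ ω, (ζ ω - η ω)^2 ∂P) '' PP) := by
    intro ζ η
    refine Real.sSup_nonneg ?_
    rintro r ⟨P, hP, rfl⟩
    exact integral_nonneg fun ω => sq_nonneg _
  set BSET := {r : ℝ | ∃ η : Ω → ℝ, (MemLp η (ENNReal.ofReal (2+ε)) P₀ ∧ Measurable[m] η) ∧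
      r = sSup ((fun P => ∫ ω, (ξ ω - η ω)^2 ∂P) '' PP)} with hBdef
  set ASET := {r : ℝ | ∃ η : Ω → ℝ, (MemLp η (ENNReal.ofReal (2+ε)) P₀ ∧ Measurable[m] η) ∧
      r = sSup ((fun P => ∫ ω, ((fun w => lam * ξ w) ω - η ω)^2 ∂P) '' PP)} with hAdef
  have hbbB : BddBelow BSET := by
    refine ⟨0, ?_⟩
    rintro r ⟨η, _, rfl⟩
    exact hSnonneg ξ η
  have hbbA : BddBelow ASET := by
    refine ⟨0, ?_⟩
    rintro r ⟨η, _, rfl⟩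
    exact hSnonneg (fun w => lam * ξ w) η
  -- sInf ASET = lam² * sInf BSET
  have hAle : sInf ASET ≤ lam^2 * sInf BSET := by
    refine csInf_le hbbA ⟨fun ω => lam * ηhat ω, ⟨hlamhat_mem, hlamhat_meas⟩, ?_⟩
    rw [← hmin]
    exact (hscale ηhat).symm
  have hAge : lam^2 * sInf BSET ≤ sInf ASET := by
    refine le_csInf ⟨_, ⟨η', ⟨hh'm, hh'meas⟩, rfl⟩⟩ ?_
    rintro r ⟨η, ⟨hη1, hη2⟩, rfl⟩
    by_cases hlam : lam = 0
    · subst hlam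
      simpa using hSnonneg (fun w => (0:ℝ) * ξ w) η
    · have h1 : sSup ((fun P => ∫ ω, ((fun w => lam * ξ w) ω - η ω)^2 ∂P) '' PP)
          = lam^2 * sSup ((fun P => ∫ ω, (ξ ω - lam⁻¹ * η ω)^2 ∂P) '' PP) := hscale' hlam η
      rw [h1]
      refine mul_le_mul_of_nonneg_left ?_ (sq_nonneg lam)
      exact csInf_le hbbB ⟨fun ω => lam⁻¹ * η ω, ⟨hη1.const_mul _, hη2.const_mul _⟩, rfl⟩
  -- λ·ηhat is also a minimizer of the λ-problem
  have hfinal : sSup ((fun P => ∫ ω, ((fun w => lam * ξ w) ω - lam * ηhat ω)^2 ∂P) '' PP)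
      = sInf ASET := by
    have h1 : sSup ((fun P => ∫ ω, ((fun w => lam * ξ w) ω - lam * ηhat ω)^2 ∂P) '' PP)
        = lam^2 * sSup ((fun P => ∫ ω, (ξ ω - ηhat ω)^2 ∂P) '' PP) := hscale ηhat
    rw [h1, hmin]
    exact le_antisymm hAge hAle
  exact stmt14_uniq m P₀ ε hε PP hne hprob hproper ⟨_, hbdd.choose_spec.1,
    hbdd.choose_spec.2⟩ hcompact (fun w => lam * ξ w) hζ η' (fun ω => lam * ηhat ω)
    hh'm hh'meas hlamhat_mem hlamhat_meas hmin' hfinal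
end

section
/- (Independence) Under the standing assumptions, if ξ ∈ L^{4+2ε}(Ω, P₀) is independent of the sub-σ-algebra 𝒞 under every P ∈ 𝒫, then the minimum mean square estimator ρ(ξ|𝒞) is P₀-a.s. equal to a constant. -/
open MeasureTheory ProbabilityTheory Filter
open scoped ENNReal

set_option maxHeartbeats 1000000 in
/-- Independence: if `ξ` is independent of the sub-σ-algebra `𝒞` under
every `P ∈ 𝒫`, then the minimum mean square estimator `ρ(ξ|𝒞)` is `P₀`-a.s. constant. -/
theorem stmt16 {Ω : Type*} (m : MeasurableSpace Ω) [mΩ : MeasurableSpace Ω] (hm : m ≤ mΩ)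
    (P₀ : Measure Ω) [IsProbabilityMeasure P₀]
    (ε : ℝ) (hε : ε ∈ Set.Ioo (0:ℝ) 1)
    (PP : Set (Measure Ω)) (hne : PP.Nonempty)
    (hprob : ∀ P ∈ PP, IsProbabilityMeasure P)
    -- ρ is proper: every P ∈ 𝒫 is equivalent to P₀
    (hproper : ∀ P ∈ PP, P ≪ P₀ ∧ P₀ ≪ P)
    -- stability of 𝒫: f^P / E_{P₀}[f^P | 𝒞] is again a density of a member of 𝒫
    (hstable : ∀ P ∈ PP, ∃ Q ∈ PP,
      (fun ω => (Q.rnDeriv P₀ ω).toReal) =ᵐ[P₀]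
        fun ω => (P.rnDeriv P₀ ω).toReal /
          (P₀[fun ω' => (P.rnDeriv P₀ ω').toReal | m]) ω)
    -- the density set 𝒟 is norm bounded in L^{1+2/ε}(P₀)
    (hbdd : ∃ C : ℝ≥0∞, C < ⊤ ∧ ∀ P ∈ PP,
      eLpNorm (fun ω => (P.rnDeriv P₀ ω).toReal) (ENNReal.ofReal (1 + 2/ε)) P₀ ≤ C)
    -- the density set 𝒟 is σ(L^{1+2/ε}, L^{1+ε/2})-(sequentially) compact
    (hcompact : ∀ Pn : ℕ → Measure Ω, (∀ n, Pn n ∈ PP) → ∃ φ : ℕ → ℕ, StrictMono φ ∧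
      ∃ Q ∈ PP, ∀ h : Ω → ℝ, MemLp h (ENNReal.ofReal (1 + ε/2)) P₀ →
        Tendsto (fun n => ∫ ω, ((Pn (φ n)).rnDeriv P₀ ω).toReal * h ω ∂P₀) atTop
          (nhds (∫ ω, (Q.rnDeriv P₀ ω).toReal * h ω ∂P₀)))
    (ξ : Ω → ℝ) (hξ : MemLp ξ (ENNReal.ofReal (4 + 2*ε)) P₀)
    (hindep : ∀ P ∈ PP, Indep (MeasurableSpace.comap ξ inferInstance) m P) :
    ∀ ηhat : Ω → ℝ,
      MemLp ηhat (ENNReal.ofReal (2+ε)) P₀ → Measurable[m] ηhat →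
      sSup ((fun P => ∫ ω, (ξ ω - ηhat ω)^2 ∂P) '' PP) = sInf {r : ℝ | ∃ η : Ω → ℝ, (MemLp η (ENNReal.ofReal (2+ε)) P₀ ∧ Measurable[m] η) ∧ r = sSup ((fun P => ∫ ω, (ξ ω - η ω)^2 ∂P) '' PP)} →
      ∃ c : ℝ, ηhat =ᵐ[P₀] (fun _ => c) := by
  obtain ⟨hε0, hε1⟩ := hε
  intro ηhat hηhat hηhatm hmin
  obtain ⟨C, hC, hCb⟩ := hbdd
  haveI : SigmaFinite (P₀.trim hm) := by
    infer_instance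
  set p : ℝ≥0∞ := ENNReal.ofReal (1 + 2/ε) with hp_def
  set q : ℝ≥0∞ := ENNReal.ofReal (1 + ε/2) with hq_def
  set s : ℝ≥0∞ := ENNReal.ofReal (2 + ε) with hs_def
  have hεne : ε ≠ 0 := ne_of_gt hε0
  have ha : (0:ℝ) < 1 + 2/ε := by positivity
  have hb : (0:ℝ) < 1 + ε/2 := by positivity
  have hc2 : (0:ℝ) < 2 + ε := by positivity
  have hpq1 : 1/p + 1/q = 1 := by
    simp only [hp_def, hq_def, one_div]
    rw [← ENNReal.ofReal_inv_of_pos ha,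
      ← ENNReal.ofReal_inv_of_pos hb, ← ENNReal.ofReal_add (by positivity) (by positivity),
      ← ENNReal.ofReal_one]
    congr 1
    field_simp
    ring
  have hpq1' : (1:ℝ≥0∞)/1 = 1/p + 1/q := by rw [hpq1]; simp
  have hqss : 1/q = 1/s + 1/s := by
    simp only [hq_def, hs_def, one_div]
    rw [← ENNReal.ofReal_inv_of_pos hb,
      ← ENNReal.ofReal_inv_of_pos hc2, ← ENNReal.ofReal_add (by positivity) (by positivity)]
    congr 1
    field_simp
    ring
  have h1q : (1:ℝ≥0∞) ≤ q := ENNReal.one_le_ofReal.mpr (by linarith)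
  have hqs : q ≤ s := ENNReal.ofReal_le_ofReal (by linarith)
  have hξs : MemLp ξ s P₀ := hξ.mono_exponent (ENNReal.ofReal_le_ofReal (by linarith))
  -- density facts
  have hfm : ∀ P : Measure Ω, AEStronglyMeasurable (fun ω => (P.rnDeriv P₀ ω).toReal) P₀ :=
    fun P => (Measure.measurable_rnDeriv P P₀).ennreal_toReal.aestronglyMeasurable
  have hfmem : ∀ P ∈ PP, MemLp (fun ω => (P.rnDeriv P₀ ω).toReal) p P₀ :=
    fun P hP => ⟨hfm P, lt_of_le_of_lt (hCb P hP) hC⟩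
  have hmul : ∀ u v : Ω → ℝ, MemLp u s P₀ → MemLp v s P₀ →
      MemLp (fun ω => u ω * v ω) q P₀ := by
    intro u v hu hv
    have := hv.smul (r := q) hu (hpqr := ⟨by simpa [one_div] using hqss.symm⟩)
    exact this
  have hIeq : ∀ P ∈ PP, ∀ h : Ω → ℝ,
      ∫ ω, h ω ∂P = ∫ ω, (P.rnDeriv P₀ ω).toReal * h ω ∂P₀ := by
    intro P hP h
    haveI := hprob P hP
    rw [← integral_rnDeriv_smul (hproper P hP).1]
    simp [smul_eq_mul]
  have hprod_int : ∀ P ∈ PP, ∀ h : Ω → ℝ, MemLp h q P₀ →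
      Integrable (fun ω => (P.rnDeriv P₀ ω).toReal * h ω) P₀ := by
    intro P hP h hh
    have : MemLp ((fun ω => (P.rnDeriv P₀ ω).toReal) • h) 1 P₀ := hh.smul (r := 1) (hfmem P hP) (hpqr := ⟨by simpa [one_div] using hpq1⟩)
    rw [memLp_one_iff_integrable] at this
    exact this
  have hint : ∀ P ∈ PP, ∀ h : Ω → ℝ, MemLp h q P₀ → Integrable h P := by
    intro P hP h hh
    haveI := hprob P hP
    rw [← integrable_rnDeriv_smul_iff (hproper P hP).1]
    simpa [smul_eq_mul] using hprod_int P hP h hh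
  have hbound : ∀ u : Ω → ℝ, MemLp u q P₀ → ∀ P ∈ PP,
      ∫ ω, u ω ∂P ≤ (C * eLpNorm u q P₀).toReal := by
    intro u hu P hP
    haveI := hprob P hP
    rw [hIeq P hP u]
    have hsm : AEStronglyMeasurable (fun ω => (P.rnDeriv P₀ ω).toReal * u ω) P₀ :=
      (hfm P).mul hu.1
    have h2 : eLpNorm (fun ω => (P.rnDeriv P₀ ω).toReal * u ω) 1 P₀ ≤ C * eLpNorm u q P₀ := by
      have h3 := eLpNorm_smul_le_mul_eLpNorm (μ := P₀) (r := 1) hu.1 (hfm P) (hpqr := ⟨by simpa [one_div] using hpq1⟩)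
      refine le_trans (le_of_eq ?_) (le_trans h3 (mul_le_mul_left (hCb P hP) _))
      apply eLpNorm_congr_ae
      filter_upwards with ω
      simp [smul_eq_mul]
    have hfin : C * eLpNorm u q P₀ ≠ ⊤ := (ENNReal.mul_lt_top hC hu.2).ne
    calc ∫ ω, (P.rnDeriv P₀ ω).toReal * u ω ∂P₀
        ≤ ‖∫ ω, (P.rnDeriv P₀ ω).toReal * u ω ∂P₀‖ := le_abs_self _
      _ ≤ ∫ ω, ‖(P.rnDeriv P₀ ω).toReal * u ω‖ ∂P₀ := norm_integral_le_integral_norm _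
      _ = (eLpNorm (fun ω => (P.rnDeriv P₀ ω).toReal * u ω) 1 P₀).toReal := by
          rw [integral_norm_eq_lintegral_enorm hsm, eLpNorm_one_eq_lintegral_enorm]
      _ ≤ (C * eLpNorm u q P₀).toReal := ENNReal.toReal_mono hfin h2
  have hBdd : ∀ u : Ω → ℝ, MemLp u q P₀ →
      BddAbove ((fun P => ∫ ω, u ω ∂P) '' PP) := by
    intro u hu
    refine ⟨(C * eLpNorm u q P₀).toReal, ?_⟩
    rintro r ⟨P, hP, rfl⟩
    exact hbound u hu P hP
  have hsq : ∀ η : Ω → ℝ, MemLp η s P₀ → MemLp (fun ω => (ξ ω - η ω)^2) q P₀ := by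
    intro η hη
    have h1 : MemLp (fun ω => ξ ω - η ω) s P₀ := hξs.sub hη
    have := hmul _ _ h1 h1
    simpa [pow_two] using this
  set b₀ : ℝ := ∫ ω, ηhat ω ∂P₀ with hb₀_def
  set M : ℝ := sSup ((fun P => ∫ ω, (ξ ω - ηhat ω)^2 ∂P) '' PP) with hM_def
  set Var : ℝ := (∫ ω, ηhat ω ^ 2 ∂P₀) - b₀^2 with hVar_def
  have hηq : MemLp ηhat q P₀ := hηhat.mono_exponent hqs
  have hξq : MemLp ξ q P₀ := hξs.mono_exponent hqs
  have hξξ : MemLp (fun ω => ξ ω * ξ ω) q P₀ := hmul _ _ hξs hξs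
  have hξη : MemLp (fun ω => ξ ω * ηhat ω) q P₀ := hmul _ _ hξs hηhat
  have hηη : MemLp (fun ω => ηhat ω * ηhat ω) q P₀ := hmul _ _ hηhat hηhat
  -- the key estimate
  have key : ∀ P ∈ PP, ∫ ω, (ξ ω - b₀)^2 ∂P ≤ M - Var := by
    intro P hP
    haveI := hprob P hP
    obtain ⟨Q, hQ, hQd⟩ := hstable P hP
    haveI := hprob Q hQ
    have hPac := (hproper P hP).1
    have hPac' := (hproper P hP).2
    have hQac := (hproper Q hQ).1
    set fP : Ω → ℝ := fun ω => (P.rnDeriv P₀ ω).toReal with hfP_def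
    set fQ : Ω → ℝ := fun ω => (Q.rnDeriv P₀ ω).toReal with hfQ_def
    set g : Ω → ℝ := P₀[fP | m] with hg_def
    have hgsm : StronglyMeasurable[m] g := stronglyMeasurable_condExp
    have hgm : Measurable[m] g := hgsm.measurable
    have hfPint : Integrable fP P₀ := Measure.integrable_toReal_rnDeriv
    have hfQint : Integrable fQ P₀ := Measure.integrable_toReal_rnDeriv
    have hfPpos : ∀ᵐ ω ∂P₀, 0 < fP ω := by
      have h1 : ∀ᵐ ω ∂P, 0 < P.rnDeriv P₀ ω := Measure.rnDeriv_pos hPac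
      have h2 : ∀ᵐ ω ∂P₀, 0 < P.rnDeriv P₀ ω := h1.filter_mono hPac'.ae_le
      filter_upwards [h2, Measure.rnDeriv_lt_top P P₀] with ω h3 h4
      exact ENNReal.toReal_pos h3.ne' h4.ne
    have hA0 : P₀ {ω | g ω ≤ 0} = 0 := by
      have hAm : MeasurableSet[m] {ω | g ω ≤ 0} := measurableSet_le hgm measurable_const
      have hAm0 : MeasurableSet {ω | g ω ≤ 0} := hm _ hAm
      have heq : ∫ ω in {ω | g ω ≤ 0}, g ω ∂P₀ = ∫ ω in {ω | g ω ≤ 0}, fP ω ∂P₀ :=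
        setIntegral_condExp hm hfPint hAm
      have hle : ∫ ω in {ω | g ω ≤ 0}, fP ω ∂P₀ ≤ 0 := by
        rw [← heq]; exact setIntegral_nonpos hAm0 fun ω hω => hω
      have hge : (0:ℝ) ≤ ∫ ω in {ω | g ω ≤ 0}, fP ω ∂P₀ :=
        setIntegral_nonneg hAm0 fun ω _ => ENNReal.toReal_nonneg
      have hzero : ∫ ω in {ω | g ω ≤ 0}, fP ω ∂P₀ = 0 := le_antisymm hle hge
      have h0 : fP =ᵐ[P₀.restrict {ω | g ω ≤ 0}] 0 :=
        (integral_eq_zero_iff_of_nonneg (fun ω => ENNReal.toReal_nonneg)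
          (hfPint.integrableOn)).mp hzero
      have h1 : ∀ᵐ ω ∂P₀.restrict {ω | g ω ≤ 0}, False := by
        filter_upwards [h0, ae_restrict_of_ae hfPpos] with ω hω1 hω2
        rw [Pi.zero_apply] at hω1
        exact absurd hω1 hω2.ne'
      have h2 : P₀.restrict {ω | g ω ≤ 0} Set.univ = 0 := by
        simpa using ae_iff.mp h1
      simpa [Measure.restrict_apply_univ] using h2
    have hgpos : ∀ᵐ ω ∂P₀, 0 < g ω := by
      rw [ae_iff]
      simpa [not_lt] using hA0
    have hadj : ∀ k : Ω → ℝ, StronglyMeasurable[m] k →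
        Integrable (fun ω => k ω * fP ω) P₀ →
        ∫ ω, k ω * fP ω ∂P₀ = ∫ ω, k ω * g ω ∂P₀ := by
      intro k hk hkint
      have h1 : P₀[k * fP | m] =ᵐ[P₀] k * P₀[fP | m] :=
        condExp_mul_of_stronglyMeasurable_left hk hkint hfPint
      calc ∫ ω, k ω * fP ω ∂P₀ = ∫ ω, (P₀[k * fP | m]) ω ∂P₀ :=
            (integral_condExp hm).symm
        _ = ∫ ω, (k * P₀[fP | m]) ω ∂P₀ := integral_congr_ae h1
        _ = ∫ ω, k ω * g ω ∂P₀ := by rfl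
    have hQmi : ∀ h : Ω → ℝ, MemLp h q P₀ → Measurable[m] h →
        ∫ ω, h ω ∂Q = ∫ ω, h ω ∂P₀ := by
      intro h hhq hhm
      have hksm : StronglyMeasurable[m] (fun ω => h ω / g ω) :=
        (Measurable.div hhm hgm).stronglyMeasurable
      have hQint : Integrable (fun ω => fQ ω * h ω) P₀ := hprod_int Q hQ h hhq
      have hcongr : (fun ω => fQ ω * h ω) =ᵐ[P₀] fun ω => (h ω / g ω) * fP ω := by
        filter_upwards [hQd] with ω hω
        rw [hω]; ring
      have hkint : Integrable (fun ω => (h ω / g ω) * fP ω) P₀ := hQint.congr hcongr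
      calc ∫ ω, h ω ∂Q = ∫ ω, fQ ω * h ω ∂P₀ := hIeq Q hQ h
        _ = ∫ ω, (h ω / g ω) * fP ω ∂P₀ := integral_congr_ae hcongr
        _ = ∫ ω, (h ω / g ω) * g ω ∂P₀ := hadj _ hksm hkint
        _ = ∫ ω, h ω ∂P₀ := by
            apply integral_congr_ae
            filter_upwards [hgpos] with ω hω
            rw [div_mul_cancel₀ _ hω.ne']
    have hQconst : ∀ c : ℝ, ∫ ω, (ξ ω - c)^2 ∂Q = ∫ ω, (ξ ω - c)^2 ∂P := by
      intro c
      have hu : MemLp (fun ω => (ξ ω - c)^2) q P₀ := hsq (fun _ => c) (memLp_const c)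
      have hwm : Measurable[m] (fun ω => (g ω)⁻¹) := hgm.inv
      have hIF : IndepFun ξ (fun ω => (g ω)⁻¹) P := by
        rw [IndepFun_iff_Indep]
        exact indep_of_indep_of_le_right (hindep P hP) (measurable_iff_comap_le.mp hwm)
      have hφm : Measurable (fun x : ℝ => (x - c)^2) :=
        (measurable_id.sub measurable_const).pow measurable_const
      have hIFu : IndepFun (fun ω => (ξ ω - c)^2) (fun ω => (g ω)⁻¹) P :=
        hIF.comp hφm measurable_id
      have huP : Integrable (fun ω => (ξ ω - c)^2) P := hint P hP _ hu
      have hwP : Integrable (fun ω => (g ω)⁻¹) P := by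
        rw [← integrable_rnDeriv_smul_iff hPac]
        apply hfQint.congr
        filter_upwards [hQd] with ω hω
        rw [hω]
        simp [div_eq_mul_inv]
      have hEw : ∫ ω, (g ω)⁻¹ ∂P = 1 := by
        rw [hIeq P hP (fun ω => (g ω)⁻¹)]
        have hcg : (fun ω => fP ω * (g ω)⁻¹) =ᵐ[P₀] fQ := by
          filter_upwards [hQd] with ω hω
          rw [hω, div_eq_mul_inv]
        rw [integral_congr_ae hcg, hfQ_def, Measure.integral_toReal_rnDeriv hQac]
        simp
      have hEuw : ∫ ω, (ξ ω - c)^2 * (g ω)⁻¹ ∂P = ∫ ω, (ξ ω - c)^2 ∂Q := by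
        rw [hIeq P hP (fun ω => (ξ ω - c)^2 * (g ω)⁻¹), hIeq Q hQ (fun ω => (ξ ω - c)^2)]
        apply integral_congr_ae
        filter_upwards [hQd, hgpos] with ω hω hω2
        have hω' : ((Q.rnDeriv P₀) ω).toReal = ((P.rnDeriv P₀) ω).toReal / g ω := hω
        rw [hω']
        field_simp
      have hprod := hIFu.integral_fun_mul_eq_mul_integral huP.1 hwP.1
      calc ∫ ω, (ξ ω - c)^2 ∂Q = ∫ ω, (ξ ω - c)^2 * (g ω)⁻¹ ∂P := hEuw.symm
        _ = (∫ ω, (ξ ω - c)^2 ∂P) * (∫ ω, (g ω)⁻¹ ∂P) := hprod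
        _ = ∫ ω, (ξ ω - c)^2 ∂P := by rw [hEw, mul_one]
    -- independence expansion under Q
    have hIFQ : IndepFun ξ ηhat Q := by
      rw [IndepFun_iff_Indep]
      exact indep_of_indep_of_le_right (hindep Q hQ) (measurable_iff_comap_le.mp hηhatm)
    have hξQ : Integrable ξ Q := hint Q hQ ξ hξq
    have hηQ : Integrable ηhat Q := hint Q hQ ηhat hηq
    have hξξQ : Integrable (fun ω => ξ ω * ξ ω) Q := hint Q hQ _ hξξ
    have hξηQ : Integrable (fun ω => ξ ω * ηhat ω) Q := hint Q hQ _ hξη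
    have hηηQ : Integrable (fun ω => ηhat ω * ηhat ω) Q := hint Q hQ _ hηη
    have hmulQ : ∫ ω, ξ ω * ηhat ω ∂Q = (∫ ω, ξ ω ∂Q) * (∫ ω, ηhat ω ∂Q) :=
      hIFQ.integral_fun_mul_eq_mul_integral hξQ.1 hηQ.1
    have hEη : ∫ ω, ηhat ω ∂Q = b₀ := hQmi ηhat hηq hηhatm
    have hEη2 : ∫ ω, ηhat ω * ηhat ω ∂Q = ∫ ω, ηhat ω * ηhat ω ∂P₀ :=
      hQmi _ hηη (hηhatm.mul hηhatm)
    have hexp1 : ∫ ω, (ξ ω - ηhat ω)^2 ∂Q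
        = ∫ ω, ξ ω * ξ ω ∂Q - 2 * ((∫ ω, ξ ω ∂Q) * b₀) + ∫ ω, ηhat ω * ηhat ω ∂P₀ := by
      have h1 : (fun ω => (ξ ω - ηhat ω)^2)
          = fun ω => ξ ω * ξ ω - 2 * (ξ ω * ηhat ω) + ηhat ω * ηhat ω := by
        funext ω; ring
      have hf1 : Integrable (fun ω => ξ ω * ξ ω - 2 * (ξ ω * ηhat ω)) Q :=
        hξξQ.sub (hξηQ.const_mul 2)
      have hf2 : Integrable (fun ω => 2 * (ξ ω * ηhat ω)) Q := hξηQ.const_mul 2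
      rw [h1, integral_add hf1 hηηQ, integral_sub hξξQ hf2, integral_const_mul, hmulQ, hEη, hEη2]
    have hexp2 : ∫ ω, (ξ ω - b₀)^2 ∂Q
        = ∫ ω, ξ ω * ξ ω ∂Q - 2 * ((∫ ω, ξ ω ∂Q) * b₀) + b₀^2 := by
      have h1 : (fun ω => (ξ ω - b₀)^2)
          = fun ω => ξ ω * ξ ω - 2 * (ξ ω * b₀) + b₀^2 := by
        funext ω; ring
      have hξb : Integrable (fun ω => ξ ω * b₀) Q := hξQ.mul_const b₀
      have hf1 : Integrable (fun ω => ξ ω * ξ ω - 2 * (ξ ω * b₀)) Q := hξξQ.sub (hξb.const_mul 2)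
      have hf2 : Integrable (fun ω => 2 * (ξ ω * b₀)) Q := hξb.const_mul 2
      rw [h1, integral_add hf1 (integrable_const _), integral_sub hξξQ hf2,
        integral_const_mul, integral_mul_const, integral_const]
      simp
    have hle : ∫ ω, (ξ ω - ηhat ω)^2 ∂Q ≤ M := by
      apply le_csSup (hBdd _ (hsq ηhat hηhat))
      exact ⟨Q, hQ, rfl⟩
    have hpow : ∫ ω, ηhat ω ^ 2 ∂P₀ = ∫ ω, ηhat ω * ηhat ω ∂P₀ := by
      simp [pow_two]
    calc ∫ ω, (ξ ω - b₀)^2 ∂P = ∫ ω, (ξ ω - b₀)^2 ∂Q := (hQconst b₀).symm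
      _ = ∫ ω, (ξ ω - ηhat ω)^2 ∂Q - Var := by
          rw [hexp1, hexp2, hVar_def, hpow]; ring
      _ ≤ M - Var := by linarith
  -- assemble
  have hconst_mem : sSup ((fun P => ∫ ω, (ξ ω - b₀)^2 ∂P) '' PP) ∈
      {r : ℝ | ∃ η : Ω → ℝ, (MemLp η s P₀ ∧ Measurable[m] η) ∧
        r = sSup ((fun P => ∫ ω, (ξ ω - η ω)^2 ∂P) '' PP)} :=
    ⟨fun _ => b₀, ⟨memLp_const b₀, @measurable_const _ _ _ m _⟩, rfl⟩
  have hSbdd : BddBelow {r : ℝ | ∃ η : Ω → ℝ, (MemLp η s P₀ ∧ Measurable[m] η) ∧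
      r = sSup ((fun P => ∫ ω, (ξ ω - η ω)^2 ∂P) '' PP)} := by
    refine ⟨0, ?_⟩
    rintro r ⟨η, hη, rfl⟩
    apply Real.sSup_nonneg
    rintro x ⟨P, hP, rfl⟩
    exact integral_nonneg fun ω => sq_nonneg _
  have h1 : sInf {r : ℝ | ∃ η : Ω → ℝ, (MemLp η s P₀ ∧ Measurable[m] η) ∧
      r = sSup ((fun P => ∫ ω, (ξ ω - η ω)^2 ∂P) '' PP)}
      ≤ sSup ((fun P => ∫ ω, (ξ ω - b₀)^2 ∂P) '' PP) := csInf_le hSbdd hconst_mem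
  have h2 : sSup ((fun P => ∫ ω, (ξ ω - b₀)^2 ∂P) '' PP) ≤ M - Var := by
    apply csSup_le (hne.image _)
    rintro r ⟨P, hP, rfl⟩
    exact key P hP
  have h3 : M ≤ M - Var := hmin.trans_le (le_trans h1 h2)
  have hVar0 : Var ≤ 0 := by linarith
  have hη1 : Integrable ηhat P₀ := hηq.integrable h1q
  have hη2int : Integrable (fun ω => ηhat ω ^ 2) P₀ := by
    have := hηη.integrable h1q
    simpa [pow_two] using this
  have hηc : Integrable (fun ω => 2 * b₀ * ηhat ω) P₀ := hη1.const_mul (2 * b₀)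
  have hvsub : Integrable (fun ω => ηhat ω ^ 2 - 2 * b₀ * ηhat ω) P₀ := hη2int.sub hηc
  have hvar_eq : ∫ ω, (ηhat ω - b₀)^2 ∂P₀ = Var := by
    have h1 : (fun ω => (ηhat ω - b₀)^2)
        = fun ω => (ηhat ω ^ 2 - 2 * b₀ * ηhat ω) + b₀^2 := by
      funext ω; ring
    rw [h1, integral_add hvsub (integrable_const _), integral_sub hη2int hηc,
      integral_const]
    have h2 : ∫ ω, 2 * b₀ * ηhat ω ∂P₀ = 2 * b₀ * b₀ := by
      rw [integral_const_mul, ← hb₀_def]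
    have h3 : P₀.real Set.univ = 1 := by simp
    rw [h2, h3, hVar_def, one_smul]
    ring
  have hintv : Integrable (fun ω => (ηhat ω - b₀)^2) P₀ := by
    have h1 : (fun ω => (ηhat ω - b₀)^2)
        = fun ω => (ηhat ω ^ 2 - 2 * b₀ * ηhat ω) + b₀^2 := by
      funext ω; ring
    rw [h1]
    exact hvsub.add (integrable_const _)
  have hz : ∫ ω, (ηhat ω - b₀)^2 ∂P₀ = 0 :=
    le_antisymm (by rw [hvar_eq]; exact hVar0) (integral_nonneg fun ω => sq_nonneg _)
  have hae := (integral_eq_zero_iff_of_nonneg (fun ω => sq_nonneg _) hintv).mp hz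
  refine ⟨b₀, ?_⟩
  filter_upwards [hae] with ω hω
  rw [Pi.zero_apply] at hω
  have := pow_eq_zero_iff (two_ne_zero) |>.mp hω
  have := sub_eq_zero.mp this
  exact this
end

section
/- (Two-point example) Let Ω = {ω₁, ω₂} with F its power set and 𝒞 = {∅, Ω} the trivial σ-algebra. Let P₁ = (1/3)δ_{ω₁} + (2/3)δ_{ω₂}, P₂ = (2/3)δ_{ω₁} + (1/3)δ_{ω₂}, 𝒫 = {λP₁ + (1−λ)P₂ : λ ∈ [0,1]}, ρ(ζ) = sup_{P∈𝒫} E_P[ζ], and ξ = 2·1_{{ω₁}} + 6·1_{{ω₂}}. Then ρ(ξ) = 14/3, while the minimum mean square estimator of ξ given 𝒞 (the constant c minimizing ρ((ξ−c)²)) equals 4, attained at the measure P̂ = (1/2)δ_{ω₁} + (1/2)δ_{ω₂} ∈ 𝒫. In particular, ρ(ξ|𝒞) ≠ ρ(ξ). -/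
/-!
Every expectation `E_P[ζ]` is affine in the mixing weight `λ` of `P = λP₁ + (1-λ)P₂`, so the
values `E_P[ζ]`, `P ∈ 𝒫`, fill the segment between `E_{P₂}[ζ]` and `E_{P₁}[ζ]` and `ρ(ζ)` is the
larger of the two. For `ζ = (ξ - c)²` that maximum dominates the expectation under the midpoint
`P̂ = (P₁ + P₂)/2`, which is `(c - 4)² + 4`, and `c = 4` attains the bound `4`.
-/

open MeasureTheory ProbabilityTheory Filter
open scoped ENNReal

/-- The two-point measure `P₁ = (1/3)δ_{ω₁} + (2/3)δ_{ω₂}` (with `ω₁ = true`, `ω₂ = false`). -/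
noncomputable def exP1 : Measure Bool :=
  (1/3 : ℝ≥0∞) • Measure.dirac true + (2/3 : ℝ≥0∞) • Measure.dirac false

/-- The two-point measure `P₂ = (2/3)δ_{ω₁} + (1/3)δ_{ω₂}`. -/
noncomputable def exP2 : Measure Bool :=
  (2/3 : ℝ≥0∞) • Measure.dirac true + (1/3 : ℝ≥0∞) • Measure.dirac false

/-- `𝒫 = {λP₁ + (1-λ)P₂ : λ ∈ [0,1]}`. -/
noncomputable def exPP : Set (Measure Bool) :=
  {P | ∃ l ∈ Set.Icc (0:ℝ) 1, P = ENNReal.ofReal l • exP1 + ENNReal.ofReal (1 - l) • exP2}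

/-- `ρ(ζ) = sup_{P∈𝒫} E_P[ζ]`. -/
noncomputable def exRho (ζ : Bool → ℝ) : ℝ := sSup ((fun P => ∫ ω, ζ ω ∂P) '' exPP)

/-- `ξ = 2·1_{ω₁} + 6·1_{ω₂}`. -/
noncomputable def exXi : Bool → ℝ := fun b => if b then 2 else 6

theorem integral_ofReal_smul_add_ofReal_smul {α : Type*} [MeasurableSpace α] {μ ν : Measure α}
    {f : α → ℝ} (hμ : Integrable f μ) (hν : Integrable f ν) {s t : ℝ} (hs : 0 ≤ s) (ht : 0 ≤ t) :
    ∫ x, f x ∂(ENNReal.ofReal s • μ + ENNReal.ofReal t • ν) =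
      s * ∫ x, f x ∂μ + t * ∫ x, f x ∂ν := by
  rw [integral_add_measure (hμ.smul_measure ENNReal.ofReal_ne_top)
      (hν.smul_measure ENNReal.ofReal_ne_top), integral_smul_measure, integral_smul_measure,
    ENNReal.toReal_ofReal hs, ENNReal.toReal_ofReal ht, smul_eq_mul, smul_eq_mul]

theorem integrable_smul_dirac_add_smul_dirac {α : Type*} [MeasurableSpace α]
    [MeasurableSingletonClass α] {a b : ℝ≥0∞} (ha : a ≠ ∞) (hb : b ≠ ∞) (x y : α) (f : α → ℝ) :
    Integrable f (a • Measure.dirac x + b • Measure.dirac y) :=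
  ((integrable_dirac enorm_lt_top).smul_measure ha).add_measure
    ((integrable_dirac enorm_lt_top).smul_measure hb)

theorem integral_smul_dirac_add_smul_dirac {α : Type*} [MeasurableSpace α]
    [MeasurableSingletonClass α] {a b : ℝ≥0∞} (ha : a ≠ ∞) (hb : b ≠ ∞) (x y : α) (f : α → ℝ) :
    ∫ z, f z ∂(a • Measure.dirac x + b • Measure.dirac y) = a.toReal * f x + b.toReal * f y := by
  rw [integral_add_measure ((integrable_dirac enorm_lt_top).smul_measure ha)
      ((integrable_dirac enorm_lt_top).smul_measure hb),
    integral_smul_measure, integral_smul_measure, integral_dirac, integral_dirac,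
    smul_eq_mul, smul_eq_mul]

theorem csSup_segment (a b : ℝ) : sSup (segment ℝ a b) = max a b := by
  rw [segment_eq_uIcc, Set.uIcc, csSup_Icc inf_le_sup]

theorem integral_exP1 (f : Bool → ℝ) : ∫ ω, f ω ∂exP1 = (f true + 2 * f false) / 3 := by
  rw [exP1, integral_smul_dirac_add_smul_dirac (by simp) (by simp [ENNReal.div_eq_top])]
  simp [ENNReal.toReal_div]
  ring

theorem integral_exP2 (f : Bool → ℝ) : ∫ ω, f ω ∂exP2 = (2 * f true + f false) / 3 := by
  rw [exP2, integral_smul_dirac_add_smul_dirac (by simp [ENNReal.div_eq_top]) (by simp)]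
  simp [ENNReal.toReal_div]
  ring

theorem integrable_exP1 (f : Bool → ℝ) : Integrable f exP1 :=
  integrable_smul_dirac_add_smul_dirac (by simp) (by simp [ENNReal.div_eq_top]) _ _ f

theorem integrable_exP2 (f : Bool → ℝ) : Integrable f exP2 :=
  integrable_smul_dirac_add_smul_dirac (by simp [ENNReal.div_eq_top]) (by simp) _ _ f

theorem exRho_eq_max (f : Bool → ℝ) :
    exRho f = max (∫ ω, f ω ∂exP2) (∫ ω, f ω ∂exP1) := by
  have hPP : exPP = (fun l : ℝ => ENNReal.ofReal l • exP1 + ENNReal.ofReal (1 - l) • exP2) ''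
      Set.Icc 0 1 := by
    ext P
    simp [exPP, eq_comm]
  rw [exRho, hPP, Set.image_image, ← csSup_segment, segment_eq_image]
  refine congrArg sSup (Set.image_congr fun l hl => ?_)
  rw [integral_ofReal_smul_add_ofReal_smul (integrable_exP1 f) (integrable_exP2 f) hl.1
    (sub_nonneg.2 hl.2), smul_eq_mul, smul_eq_mul, add_comm]

theorem exP1_add_exP2 : exP1 + exP2 = Measure.dirac true + Measure.dirac false := by
  have h : (1 / 3 + 2 / 3 : ℝ≥0∞) = 1 := by
    rw [ENNReal.div_add_div_same, ENNReal.div_eq_one_iff (by norm_num) (by norm_num)]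
    norm_num
  rw [exP1, exP2, add_add_add_comm, ← add_smul, ← add_smul, add_comm (2 / 3 : ℝ≥0∞), h,
    one_smul, one_smul]

theorem midpoint_mem_exPP :
    ((1/2 : ℝ≥0∞) • Measure.dirac true + (1/2 : ℝ≥0∞) • Measure.dirac false) ∈ exPP := by
  refine ⟨1 / 2, ⟨by norm_num, by norm_num⟩, ?_⟩
  have h : ENNReal.ofReal (1 / 2) = 1 / 2 := by
    rw [ENNReal.ofReal_div_of_pos two_pos, ENNReal.ofReal_one, ENNReal.ofReal_ofNat]
  rw [show (1 : ℝ) - 1 / 2 = 1 / 2 by norm_num, h, ← smul_add, ← smul_add, exP1_add_exP2]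

theorem exRho_exXi : exRho exXi = 14 / 3 := by
  rw [exRho_eq_max, integral_exP1, integral_exP2]
  norm_num [exXi]

theorem exRho_sq_sub_exXi (c : ℝ) :
    exRho (fun ω => (exXi ω - c) ^ 2) = max ((2 * (2 - c) ^ 2 + (6 - c) ^ 2) / 3)
      (((2 - c) ^ 2 + 2 * (6 - c) ^ 2) / 3) := by
  rw [exRho_eq_max, integral_exP1, integral_exP2]
  norm_num [exXi]

theorem four_le_exRho_sq_sub_exXi (c : ℝ) : 4 ≤ exRho (fun ω => (exXi ω - c) ^ 2) := by
  rw [exRho_sq_sub_exXi, le_max_iff]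
  by_contra! h
  -- the two expectations average to `((2 - c)² + (6 - c)²) / 2 = (c - 4)² + 4`
  nlinarith [h.1, h.2, sq_nonneg (c - 4)]

theorem exRho_sq_sub_four : exRho (fun ω => (exXi ω - 4) ^ 2) = 4 := by
  rw [exRho_sq_sub_exXi]
  norm_num

/-- Two-point example: `ρ(ξ) = 14/3`, while the minimum mean square
estimator of `ξ` given the trivial σ-algebra is the constant `4`, attained at the measure
`P̂ = (1/2)δ_{ω₁} + (1/2)δ_{ω₂} ∈ 𝒫`; in particular `ρ(ξ|𝒞) ≠ ρ(ξ)`. -/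
theorem stmt18 :
    exRho exXi = 14/3 ∧
    (∀ c : ℝ, exRho (fun ω => (exXi ω - 4)^2) ≤ exRho (fun ω => (exXi ω - c)^2)) ∧
    ((1/2 : ℝ≥0∞) • Measure.dirac true + (1/2 : ℝ≥0∞) • Measure.dirac false) ∈ exPP ∧
    (∫ ω, exXi ω
      ∂((1/2 : ℝ≥0∞) • Measure.dirac true + (1/2 : ℝ≥0∞) • Measure.dirac false)) = 4 ∧
    (4 : ℝ) ≠ 14/3 := by
  refine ⟨exRho_exXi, fun c => ?_, midpoint_mem_exPP, ?_, by norm_num⟩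
  · rw [exRho_sq_sub_four]
    exact four_le_exRho_sq_sub_exXi c
  · rw [integral_smul_dirac_add_smul_dirac (by simp) (by simp)]
    norm_num [exXi]
end
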